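/- (Dominated Convergence Theorem) Suppose α is a continuous rotationally symmetric norm on L^∞(𝕋). Let G_α = {φ ∈ MP(𝕋) : α(h∘φ) = α(h) for all h ∈ L^∞(𝕋)}. Suppose g ∈ L^α(𝕋), let K be the convex hull of {|g∘φ|·u : u ∈ L^∞(𝕋), ‖u‖_∞ ≤ 1, φ ∈ G_α}, and let K̄^m denote the closure of K in the topology of convergence in m-measure. If {fₙ} is a sequence of measurable functions with |fₙ| ∈ K̄^m for every n and fₙ → f in measure, then f ∈ L^α(𝕋) and α(fₙ − f) → 0. -/

import Mathlib

open MeasureTheory Filter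
open scoped ENNReal Real

noncomputable section

instance fact_two_pi_pos : Fact ((0:ℝ) < 2 * Real.pi) := ⟨by positivity⟩

/-- The circle `𝕋`, modelled additively as `ℝ / 2πℤ`. -/
abbrev 𝕋 : Type := AddCircle (2 * Real.pi)

/-- Normalized Haar (arc-length) probability measure on `𝕋`. -/
abbrev m : Measure 𝕋 := AddCircle.haarAddCircle

/-- A rotationally symmetric norm on `L^∞(𝕋)`, extended to all measurable functions via
`α f = sup { α s : s simple, |s| ≤ |f| a.e. }`. -/
structure RotNorm where
  α : (𝕋 → ℂ) → ℝ≥0∞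
  ae_eq : ∀ f g : 𝕋 → ℂ, f =ᵐ[m] g → α f = α g
  add_le : ∀ f g : 𝕋 → ℂ, α (f + g) ≤ α f + α g
  smul_eq : ∀ (c : ℂ) (f : 𝕋 → ℂ), α (c • f) = (‖c‖₊ : ℝ≥0∞) * α f
  one_eq : α 1 = 1
  abs_eq : ∀ f : 𝕋 → ℂ, α (fun z => (‖f z‖ : ℂ)) = α f
  rot_eq : ∀ (w : 𝕋) (f : 𝕋 → ℂ), α (fun z => f (z - w)) = α f
  simple_sup : ∀ f : 𝕋 → ℂ, AEMeasurable f m →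
    α f = ⨆ (s : SimpleFunc 𝕋 ℂ) (_ : ∀ᵐ z ∂m, ‖s z‖ ≤ ‖f z‖), α s

/-- `α` is in addition a symmetric gauge norm: invariant under all invertible
measure-preserving transformations of `𝕋`. -/
def RotNorm.IsSymmGauge (N : RotNorm) : Prop :=
  ∀ φ : 𝕋 ≃ᵐ 𝕋, MeasurePreserving (⇑φ) m m → ∀ f : 𝕋 → ℂ, N.α (f ∘ ⇑φ) = N.α f

/-- Continuity of a norm: `α(χ_E) → 0` as `m(E) → 0⁺`. -/
def IsContNorm (γ : (𝕋 → ℂ) → ℝ≥0∞) : Prop :=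
  ∀ ε : ℝ≥0∞, 0 < ε → ∃ δ : ℝ≥0∞, 0 < δ ∧
    ∀ E : Set 𝕋, MeasurableSet E → m E < δ → γ (E.indicator fun _ => (1:ℂ)) < ε

/-- Membership in `ℒ^α(𝕋)`: measurable with finite norm. -/
def MemScriptL (γ : (𝕋 → ℂ) → ℝ≥0∞) (f : 𝕋 → ℂ) : Prop :=
  AEMeasurable f m ∧ γ f ≠ ∞

/-- Membership in `L^α(𝕋)`: the `α`-closure of `L^∞(𝕋)` in `ℒ^α(𝕋)`. -/
def MemL (γ : (𝕋 → ℂ) → ℝ≥0∞) (f : 𝕋 → ℂ) : Prop :=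
  MemScriptL γ f ∧ ∀ ε : ℝ≥0∞, 0 < ε → ∃ g : 𝕋 → ℂ, MemLp g ⊤ m ∧ γ (f - g) < ε

/-- Strong continuity: continuity together with `L^α = ℒ^α`. -/
def StronglyCont (γ : (𝕋 → ℂ) → ℝ≥0∞) : Prop :=
  IsContNorm γ ∧ ∀ f : 𝕋 → ℂ, MemScriptL γ f → MemL γ f

/-- The dual norm `α′`. -/
def dualOf (γ : (𝕋 → ℂ) → ℝ≥0∞) (f : 𝕋 → ℂ) : ℝ≥0∞ :=
  ⨆ (h : 𝕋 → ℂ) (_ : MemLp h ⊤ m) (_ : γ h ≤ 1), ∫⁻ z, (‖f z * h z‖₊ : ℝ≥0∞) ∂m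

/-- The linear span of the analytic monomials `zⁿ`, `n ≥ 0`. -/
def analyticPolys : Submodule ℂ (𝕋 → ℂ) :=
  Submodule.span ℂ (Set.range fun n : ℕ => ((fourier (n : ℤ) : C(𝕋, ℂ)) : 𝕋 → ℂ))

/-- Membership in `H^α(𝕋)`: the `α`-closure of the span of `{zⁿ : n ≥ 0}`. -/
def MemH (γ : (𝕋 → ℂ) → ℝ≥0∞) (f : 𝕋 → ℂ) : Prop :=
  MemScriptL γ f ∧ ∀ ε : ℝ≥0∞, 0 < ε → ∃ p ∈ analyticPolys, γ (f - p) < ε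

/-- Membership in the classical Hardy space `H¹(𝕋)`. -/
def MemH1 (f : 𝕋 → ℂ) : Prop :=
  Integrable f m ∧ ∀ n : ℤ, n < 0 → fourierCoeff f n = 0

/-- The point `e^{it}` of the unit circle in `ℂ` corresponding to `t ∈ 𝕋`. -/
def eCirc : 𝕋 → ℂ := fun t => (AddCircle.toCircle t : ℂ)

/-! A family of functions is uniformly `α`-absolutely continuous at level `(δ, ε)` if
`α(χ_E h) ≤ ε` for all its members `h` and all `E` with `m E < δ`. For fixed `(δ, ε)` the
functions with this property form a convex set which is closed under convergence in measure
(`α` is lower semicontinuous for convergence in measure, because `α` is continuous), and it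
contains `|g∘φ|·u` for `φ ∈ G_α`, `‖u‖_∞ ≤ 1` as soon as it contains `g`. A function lies in
`L^α` exactly when every `ε` admits such a `δ` (truncate it where it is large). Hence the
`fₙ` and `f` are uniformly `α`-absolutely continuous, and `α(fₙ - f)` is at most `α` of
`fₙ - f` on the small set where `|fₙ - f| ≥ η`, plus `η`. -/

open scoped NNReal Topology

theorem MeasureTheory.ae_norm_le_of_eLpNorm_top_le {α E : Type*} [MeasurableSpace α]
    [SeminormedAddGroup E] {μ : Measure α} {u : α → E} {C : ℝ≥0} (h : eLpNorm u ⊤ μ ≤ C) :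
    ∀ᵐ x ∂μ, ‖u x‖ ≤ C := by
  filter_upwards [ae_le_eLpNormEssSup (f := u) (μ := μ)] with x hx
  rw [← eLpNorm_exponent_top] at hx
  exact_mod_cast enorm_le_coe.1 (hx.trans h)

namespace RotNorm

variable (N : RotNorm)

lemma alpha_zero : N.α 0 = 0 := by
  simpa using N.smul_eq 0 0

lemma alpha_sub_le (f g : 𝕋 → ℂ) : N.α (f - g) ≤ N.α f + N.α g := by
  have hneg : N.α (-g) = N.α g := by simpa using N.smul_eq (-1) g
  simpa only [sub_eq_add_neg, hneg] using N.add_le f (-g)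

lemma alpha_const (c : ℂ) : N.α (fun _ => c) = ‖c‖₊ := by
  have h : (fun _ => c) = c • (1 : 𝕋 → ℂ) := by
    ext
    simp
  rw [h, N.smul_eq, N.one_eq, mul_one]

lemma alpha_real_smul {a : ℝ} (ha : 0 ≤ a) (f : 𝕋 → ℂ) :
    N.α (a • f) = ENNReal.ofReal a * N.α f := by
  have h := N.smul_eq a f
  rw [Complex.nnnorm_real, Real.nnnorm_of_nonneg ha] at h
  rw [← ENNReal.ofNNReal_toNNReal, Real.toNNReal_of_nonneg ha, ← h]
  congr 1

variable {N}

lemma alpha_mono {f g : 𝕋 → ℂ} (hf : AEMeasurable f m) (hg : AEMeasurable g m)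
    (hfg : ∀ᵐ z ∂m, ‖f z‖ ≤ ‖g z‖) : N.α f ≤ N.α g := by
  rw [N.simple_sup f hf, N.simple_sup g hg]
  exact iSup₂_le fun s hs =>
    le_iSup₂_of_le s ((hs.and hfg).mono fun z hz => hz.1.trans hz.2) le_rfl

lemma alpha_mul_le {u f : 𝕋 → ℂ} (hu : MemLp u ⊤ m) (hf : AEMeasurable f m) :
    N.α (u * f) ≤ eLpNorm u ⊤ m * N.α f := by
  set C := (eLpNorm u ⊤ m).toNNReal
  have hC : ∀ᵐ z ∂m, ‖u z‖ ≤ C :=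
    ae_norm_le_of_eLpNorm_top_le (ENNReal.coe_toNNReal hu.2.ne).ge
  calc N.α (u * f) ≤ N.α (((C : ℝ) : ℂ) • f) := by
        refine alpha_mono (hu.1.aemeasurable.mul hf) (hf.const_smul _) (hC.mono fun z hz => ?_)
        simpa [norm_mul] using mul_le_mul_of_nonneg_right hz (norm_nonneg (f z))
    _ = eLpNorm u ⊤ m * N.α f := by
        rw [N.smul_eq, Complex.nnnorm_real, NNReal.nnnorm_eq, ENNReal.coe_toNNReal hu.2.ne]

lemma alpha_comp_le {φ : 𝕋 ≃ᵐ 𝕋} (hφ : MeasurePreserving φ m m)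
    (hαφ : ∀ h : 𝕋 → ℂ, MemLp h ⊤ m → N.α (h ∘ φ) = N.α h)
    {f : 𝕋 → ℂ} (hf : AEMeasurable f m) : N.α (f ∘ φ) ≤ N.α f := by
  rw [N.simple_sup _ (hf.comp_quasiMeasurePreserving hφ.quasiMeasurePreserving),
    N.simple_sup f hf]
  refine iSup₂_le fun s hs => ?_
  set t : SimpleFunc 𝕋 ℂ := s.comp φ.symm φ.symm.measurable
  have hts : ∀ᵐ z ∂m, ‖t z‖ ≤ ‖f z‖ :=
    ((hφ.symm φ).quasiMeasurePreserving.ae hs).mono fun z hz => by simpa [t] using hz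
  have hst : ⇑t ∘ φ = ⇑s := by
    ext z
    simp [t]
  exact le_iSup₂_of_le t hts (by rw [← hαφ t (t.memLp_top m), hst])

lemma alpha_le_indicator_add {f h : 𝕋 → ℂ} {E : Set 𝕋} {c : ℝ≥0} (hf : AEMeasurable f m)
    (hh : AEMeasurable h m) (hE : MeasurableSet E)
    (hfh : ∀ᵐ z ∂m, z ∉ E → ‖f z‖ ≤ ‖h z‖ + c) :
    N.α f ≤ N.α (E.indicator f) + (N.α h + c) := by
  have hcompl : N.α (Eᶜ.indicator f) ≤ N.α ((fun z => (‖h z‖ : ℂ)) + fun _ => ((c : ℝ) : ℂ)) := by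
    refine alpha_mono (hf.indicator hE.compl) (by fun_prop) (hfh.mono fun z hz => ?_)
    by_cases hzE : z ∈ E
    · simp [hzE]
    · have hnn : 0 ≤ ‖h z‖ + c := by positivity
      simpa [hzE, ← Complex.ofReal_add, abs_of_nonneg hnn] using hz hzE
  calc N.α f ≤ N.α (E.indicator f) + N.α (Eᶜ.indicator f) := by
        simpa only [Set.indicator_self_add_compl] using N.add_le (E.indicator f) (Eᶜ.indicator f)
    _ ≤ N.α (E.indicator f) + (N.α h + c) := by
        gcongr
        refine hcompl.trans ((N.add_le _ _).trans_eq ?_)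
        rw [N.abs_eq, N.alpha_const, Complex.nnnorm_real, NNReal.nnnorm_eq]

variable (N) in
def absContSet (δ ε : ℝ≥0∞) : Set (𝕋 → ℂ) :=
  {f | AEMeasurable f m ∧ ∀ E : Set 𝕋, MeasurableSet E → m E < δ → N.α (E.indicator f) ≤ ε}

section absContSet

variable {δ ε ε₁ ε₂ : ℝ≥0∞} {f g : 𝕋 → ℂ}

lemma mem_absContSet_of_alpha_le (hf : AEMeasurable f m) (hfε : N.α f ≤ ε) :
    f ∈ N.absContSet δ ε :=
  ⟨hf, fun _ hE _ => (alpha_mono (hf.indicator hE) hf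
    (ae_of_all _ fun z => norm_indicator_le_norm_self f z)).trans hfε⟩

lemma exists_mem_absContSet_of_memLp_top (hc : IsContNorm N.α) (hf : MemLp f ⊤ m)
    (hε : 0 < ε) : ∃ δ > 0, f ∈ N.absContSet δ ε := by
  obtain ⟨δ, hδ, hsmall⟩ := hc _ (ENNReal.div_pos_iff.2 ⟨hε.ne', hf.2.ne⟩)
  refine ⟨δ, hδ, hf.1.aemeasurable, fun E hE hmE => ?_⟩
  have hind : E.indicator f = f * E.indicator fun _ => 1 := by
    ext z
    by_cases hz : z ∈ E <;> simp [hz]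
  calc N.α (E.indicator f) ≤ eLpNorm f ⊤ m * N.α (E.indicator fun _ => 1) :=
        hind ▸ alpha_mul_le hf (aemeasurable_const.indicator hE)
    _ ≤ eLpNorm f ⊤ m * (ε / eLpNorm f ⊤ m) := by gcongr; exact (hsmall E hE hmE).le
    _ ≤ ε := ENNReal.mul_div_le

lemma add_mem_absContSet (hf : f ∈ N.absContSet δ ε₁) (hg : g ∈ N.absContSet δ ε₂) :
    f + g ∈ N.absContSet δ (ε₁ + ε₂) :=
  ⟨hf.1.add hg.1, fun E hE hmE => by
    rw [Set.indicator_add']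
    exact (N.add_le _ _).trans (add_le_add (hf.2 E hE hmE) (hg.2 E hE hmE))⟩

lemma sub_mem_absContSet (hf : f ∈ N.absContSet δ ε₁) (hg : g ∈ N.absContSet δ ε₂) :
    f - g ∈ N.absContSet δ (ε₁ + ε₂) :=
  ⟨hf.1.sub hg.1, fun E hE hmE => by
    rw [Set.indicator_sub']
    exact (N.alpha_sub_le _ _).trans (add_le_add (hf.2 E hE hmE) (hg.2 E hE hmE))⟩

lemma mem_absContSet_of_norm_le (hg : g ∈ N.absContSet δ ε) (hf : AEMeasurable f m)
    (hfg : ∀ᵐ z ∂m, ‖f z‖ ≤ ‖g z‖) : f ∈ N.absContSet δ ε :=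
  ⟨hf, fun E hE hmE => (alpha_mono (hf.indicator hE) (hg.1.indicator hE)
    (hfg.mono fun z hz => by by_cases hzE : z ∈ E <;> simp [hzE, hz])).trans (hg.2 E hE hmE)⟩

lemma comp_mem_absContSet {φ : 𝕋 ≃ᵐ 𝕋} (hφ : MeasurePreserving φ m m)
    (hαφ : ∀ h : 𝕋 → ℂ, MemLp h ⊤ m → N.α (h ∘ φ) = N.α h) (hg : g ∈ N.absContSet δ ε) :
    g ∘ φ ∈ N.absContSet δ ε := by
  refine ⟨hg.1.comp_quasiMeasurePreserving hφ.quasiMeasurePreserving, fun E hE hmE => ?_⟩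
  have hE' : MeasurableSet (φ.symm ⁻¹' E) := φ.symm.measurable hE
  have hind : E.indicator (g ∘ φ) = (φ.symm ⁻¹' E).indicator g ∘ φ := by
    ext z
    by_cases hz : z ∈ E <;> simp [hz]
  rw [hind]
  refine (alpha_comp_le hφ hαφ (hg.1.indicator hE')).trans (hg.2 _ hE' ?_)
  rwa [(hφ.symm φ).measure_preimage hE.nullMeasurableSet]

lemma convex_absContSet : Convex ℝ (N.absContSet δ ε) := by
  intro f hf g hg a b ha hb hab
  refine ⟨(hf.1.const_smul a).add (hg.1.const_smul b), fun E hE hmE => ?_⟩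
  calc N.α (E.indicator (a • f + b • g))
      ≤ N.α (a • E.indicator f) + N.α (b • E.indicator g) := by
        have hind : E.indicator (a • f + b • g) = a • E.indicator f + b • E.indicator g := by
          ext z
          by_cases hz : z ∈ E <;> simp [hz]
        exact hind ▸ N.add_le _ _
    _ ≤ ENNReal.ofReal a * ε + ENNReal.ofReal b * ε := by
        rw [N.alpha_real_smul ha, N.alpha_real_smul hb]
        gcongr
        exacts [hf.2 E hE hmE, hg.2 E hE hmE]
    _ = ε := by
        rw [← add_mul, ← ENNReal.ofReal_add ha hb, hab, ENNReal.ofReal_one, one_mul]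

lemma alpha_le_of_tendstoInMeasure (hc : IsContNorm N.α) {h : ℕ → 𝕋 → ℂ} {B : ℝ≥0∞}
    (hh : ∀ k, AEMeasurable (h k) m) (hg : AEMeasurable g m)
    (htend : TendstoInMeasure m h atTop g) (hB : ∀ k, N.α (h k) ≤ B) : N.α g ≤ B := by
  rw [N.simple_sup g hg]
  refine iSup₂_le fun s hs => ENNReal.le_of_forall_pos_le_add fun θ hθ _ => ?_
  -- The simple `s ≤ |g|` is bounded, so `α` of `s` on the small set `E` where `h k` is far
  -- from `g` is small; off `E` we have `|s| ≤ |h k| + θ / 2`.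
  have hθ2 : 0 < θ / 2 := by positivity
  obtain ⟨δ, hδ, hsδ⟩ := exists_mem_absContSet_of_memLp_top hc (s.memLp_top m)
    (ε := (θ / 2 : ℝ≥0)) (by exact_mod_cast hθ2)
  obtain ⟨k, hk⟩ := ((tendstoInMeasure_iff_dist.1 htend (θ / 2 : ℝ≥0) hθ2).eventually_lt_const
    hδ).exists
  set E := toMeasurable m {z | ((θ / 2 : ℝ≥0) : ℝ) ≤ dist (h k z) (g z)}
  have hE : MeasurableSet E := measurableSet_toMeasurable _ _
  have hsh : ∀ᵐ z ∂m, z ∉ E → ‖s z‖ ≤ ‖h k z‖ + (θ / 2 : ℝ≥0) := hs.mono fun z hsz hzE => by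
    have hdist : dist (h k z) (g z) < (θ / 2 : ℝ≥0) :=
      not_le.1 fun hz => hzE (subset_toMeasurable _ _ hz)
    linarith [norm_le_norm_add_norm_sub' (g z) (h k z), dist_eq_norm_sub' (h k z) (g z)]
  calc N.α s ≤ N.α (E.indicator s) + (N.α (h k) + (θ / 2 : ℝ≥0)) :=
        alpha_le_indicator_add s.aemeasurable (hh k) hE hsh
    _ ≤ (θ / 2 : ℝ≥0) + (B + (θ / 2 : ℝ≥0)) := by
        gcongr
        exacts [hsδ.2 E hE (by rwa [measure_toMeasurable]), hB k]
    _ = B + θ := by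
        rw [add_left_comm, ← ENNReal.coe_add, add_halves]

lemma mem_absContSet_of_tendstoInMeasure (hc : IsContNorm N.α) {h : ℕ → 𝕋 → ℂ}
    (hh : ∀ k, h k ∈ N.absContSet δ ε) (htend : TendstoInMeasure m h atTop g) :
    g ∈ N.absContSet δ ε := by
  have hg : AEMeasurable g m :=
    (htend.aestronglyMeasurable fun k => (hh k).1.aestronglyMeasurable).aemeasurable
  exact ⟨hg, fun E hE hmE => alpha_le_of_tendstoInMeasure hc (fun k => (hh k).1.indicator hE)
    (hg.indicator hE) (htend.indicator E) fun k => (hh k).2 E hE hmE⟩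

lemma exists_memLp_top_alpha_sub_le (hf : f ∈ N.absContSet δ ε) (hδ : 0 < δ) :
    ∃ g, MemLp g ⊤ m ∧ N.α (f - g) ≤ ε := by
  obtain ⟨M, hM⟩ : ∃ M : ℕ, m {z | (M : ℝ) ≤ ‖f z‖} < δ := by
    have hlim := tendsto_measure_iInter_atTop (μ := m)
      (s := fun M : ℕ => {z | (M : ℝ) ≤ ‖f z‖})
      (fun M => nullMeasurableSet_le aemeasurable_const hf.1.norm)
      (fun M M' hMM' z (hz : (M' : ℝ) ≤ ‖f z‖) => le_trans (by exact_mod_cast hMM') hz)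
      ⟨0, measure_ne_top _ _⟩
    have hempty : ⋂ M : ℕ, {z | (M : ℝ) ≤ ‖f z‖} = ∅ :=
      Set.eq_empty_of_forall_notMem fun z hz =>
        (exists_nat_gt ‖f z‖).elim fun M hM => (Set.mem_iInter.1 hz M).not_gt hM
    rw [hempty, measure_empty] at hlim
    exact (hlim.eventually_lt_const hδ).exists
  set E := toMeasurable m {z | (M : ℝ) ≤ ‖f z‖}
  have hE : MeasurableSet E := measurableSet_toMeasurable _ _
  refine ⟨Eᶜ.indicator f, memLp_top_of_bound (hf.1.aestronglyMeasurable.indicator hE.compl) M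
    (ae_of_all _ fun z => ?_), ?_⟩
  · by_cases hz : z ∈ E
    · simp [hz]
    · simpa [hz] using (not_le.1 fun h => hz (subset_toMeasurable _ _ h)).le
  · rw [sub_eq_of_eq_add (Set.indicator_self_add_compl E f).symm]
    exact hf.2 E hE (by rwa [measure_toMeasurable])

variable (N) in
theorem memL_iff_forall_mem_absContSet (hc : IsContNorm N.α) :
    MemL N.α f ↔ ∀ ε > 0, ∃ δ > 0, f ∈ N.absContSet δ ε := by
  constructor
  · rintro ⟨⟨hf, -⟩, happrox⟩ ε hε
    obtain ⟨g, hg, hfg⟩ := happrox (ε / 2) (ENNReal.half_pos hε.ne')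
    obtain ⟨δ, hδ, hgδ⟩ := exists_mem_absContSet_of_memLp_top hc hg (ENNReal.half_pos hε.ne')
    refine ⟨δ, hδ, ?_⟩
    simpa only [sub_add_cancel, ENNReal.add_halves] using
      add_mem_absContSet (mem_absContSet_of_alpha_le (hf.sub hg.1.aemeasurable) hfg.le) hgδ
  · intro h
    obtain ⟨δ, hδ, hfδ⟩ := h 1 one_pos
    obtain ⟨g, hg, hfg⟩ := exists_memLp_top_alpha_sub_le hfδ hδ
    have hαg : N.α g ≤ eLpNorm g ⊤ m := by
      simpa [N.one_eq] using alpha_mul_le (N := N) (f := 1) hg aemeasurable_const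
    have hαf : N.α f ≠ ∞ := by
      refine ne_top_of_le_ne_top (ENNReal.add_ne_top.2 ⟨ENNReal.one_ne_top, hg.2.ne⟩) ?_
      calc N.α f ≤ N.α (f - g) + N.α g := by simpa using N.add_le (f - g) g
        _ ≤ 1 + eLpNorm g ⊤ m := add_le_add hfg hαg
    refine ⟨⟨hfδ.1, hαf⟩, fun ε hε => ?_⟩
    obtain ⟨ε', hε'0, hε'⟩ := exists_between hε
    obtain ⟨δ', hδ', hfδ'⟩ := h ε' hε'0
    obtain ⟨g', hg', hfg'⟩ := exists_memLp_top_alpha_sub_le hfδ' hδ'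
    exact ⟨g', hg', hfg'.trans_lt hε'⟩

variable (N) in
def dominatedOrbit (g : 𝕋 → ℂ) : Set (𝕋 → ℂ) :=
  {F : 𝕋 → ℂ | ∃ u : 𝕋 → ℂ, MemLp u ⊤ m ∧ eLpNorm u ⊤ m ≤ 1 ∧
    ∃ φ : 𝕋 ≃ᵐ 𝕋, MeasurePreserving (⇑φ) m m ∧
      (∀ h : 𝕋 → ℂ, MemLp h ⊤ m → N.α (h ∘ ⇑φ) = N.α h) ∧
      F = fun z => ((‖g (φ z)‖ : ℝ) : ℂ) * u z}

lemma dominatedOrbit_subset_absContSet (hg : g ∈ N.absContSet δ ε) :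
    N.dominatedOrbit g ⊆ N.absContSet δ ε := by
  rintro _ ⟨u, hu, hu1, φ, hφ, hαφ, rfl⟩
  have hgφ := comp_mem_absContSet hφ hαφ hg
  have hgφu : AEMeasurable (fun z => ((‖g (φ z)‖ : ℝ) : ℂ) * u z) m :=
    (Complex.measurable_ofReal.comp_aemeasurable hgφ.1.norm).mul hu.1.aemeasurable
  refine mem_absContSet_of_norm_le hgφ hgφu
    ((ae_norm_le_of_eLpNorm_top_le (C := 1) (by simpa using hu1)).mono fun z hz => ?_)
  simpa [norm_mul] using mul_le_of_le_one_right (norm_nonneg _) hz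

theorem tendsto_alpha_sub_of_tendstoInMeasure {F : ℕ → 𝕋 → ℂ}
    (hF : ∀ ε > 0, ∃ δ > 0, ∀ n, F n - f ∈ N.absContSet δ ε)
    (hconv : TendstoInMeasure m F atTop f) :
    Tendsto (fun n => N.α (F n - f)) atTop (𝓝 0) := by
  refine ENNReal.tendsto_nhds_zero.2 fun ε hε => ?_
  obtain ⟨η, hη0, hηε⟩ := ENNReal.lt_iff_exists_nnreal_btwn.1 (ENNReal.half_pos hε.ne')
  obtain ⟨δ, hδ, hFδ⟩ := hF (ε / 2) (ENNReal.half_pos hε.ne')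
  filter_upwards [(tendstoInMeasure_iff_dist.1 hconv η (by exact_mod_cast hη0)).eventually_lt_const
    hδ] with n hn
  set E := toMeasurable m {z | (η : ℝ) ≤ dist (F n z) (f z)}
  have hE : MeasurableSet E := measurableSet_toMeasurable _ _
  have hsmall : ∀ᵐ z ∂m, z ∉ E → ‖(F n - f) z‖ ≤ ‖(0 : 𝕋 → ℂ) z‖ + η :=
    ae_of_all _ fun z hz => by
      have hdist : dist (F n z) (f z) < η := not_le.1 fun h => hz (subset_toMeasurable _ _ h)
      simpa [dist_eq_norm] using hdist.le
  calc N.α (F n - f) ≤ N.α (E.indicator (F n - f)) + (N.α 0 + η) :=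
        alpha_le_indicator_add (hFδ n).1 aemeasurable_const hE hsmall
    _ ≤ ε / 2 + ε / 2 := by
        rw [N.alpha_zero, zero_add]
        exact add_le_add ((hFδ n).2 E hE (by rwa [measure_toMeasurable])) hηε.le
    _ = ε := ENNReal.add_halves ε

end absContSet

end RotNorm

theorem dominated_convergence_general
    (N : RotNorm) (hc : IsContNorm N.α)
    (g : 𝕋 → ℂ) (hg : MemL N.α g)
    (K : Set (𝕋 → ℂ))
    (hK : K = convexHull ℝ {F : 𝕋 → ℂ | ∃ u : 𝕋 → ℂ, MemLp u ⊤ m ∧ eLpNorm u ⊤ m ≤ 1 ∧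
        ∃ φ : 𝕋 ≃ᵐ 𝕋, MeasurePreserving (⇑φ) m m ∧
          (∀ h : 𝕋 → ℂ, MemLp h ⊤ m → N.α (h ∘ ⇑φ) = N.α h) ∧
          F = fun z => ((‖g (φ z)‖ : ℝ) : ℂ) * u z})
    (F : ℕ → 𝕋 → ℂ) (f : 𝕋 → ℂ)
    (hFmeas : ∀ n, AEMeasurable (F n) m)
    (hmem : ∀ n, ∃ G : ℕ → 𝕋 → ℂ, (∀ k, G k ∈ K) ∧
      TendstoInMeasure m G atTop (fun z => ((‖F n z‖ : ℝ) : ℂ)))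
    (hconv : TendstoInMeasure m F atTop f) :
    MemL N.α f ∧ Tendsto (fun n => N.α (F n - f)) atTop (nhds 0) := by
  open RotNorm in
  have key : ∀ ε > 0, ∃ δ > 0, (∀ n, F n ∈ N.absContSet δ ε) ∧ f ∈ N.absContSet δ ε := by
    intro ε hε
    obtain ⟨δ, hδ, hgδ⟩ := (N.memL_iff_forall_mem_absContSet hc).1 hg ε hε
    have hKδ : K ⊆ N.absContSet δ ε :=
      hK ▸ convexHull_min (dominatedOrbit_subset_absContSet hgδ) convex_absContSet
    have hFδ : ∀ n, F n ∈ N.absContSet δ ε := fun n => by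
      obtain ⟨G, hGK, hG⟩ := hmem n
      exact mem_absContSet_of_norm_le (mem_absContSet_of_tendstoInMeasure hc
        (fun k => hKδ (hGK k)) hG) (hFmeas n) (ae_of_all _ fun z => by simp)
    exact ⟨δ, hδ, hFδ, mem_absContSet_of_tendstoInMeasure hc hFδ hconv⟩
  refine ⟨(N.memL_iff_forall_mem_absContSet hc).2 fun ε hε => ?_,
    RotNorm.tendsto_alpha_sub_of_tendstoInMeasure (fun ε hε => ?_) hconv⟩
  · obtain ⟨δ, hδ, -, hfδ⟩ := key ε hε
    exact ⟨δ, hδ, hfδ⟩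
  · obtain ⟨δ, hδ, hFδ, hfδ⟩ := key (ε / 2) (ENNReal.half_pos hε.ne')
    exact ⟨δ, hδ, fun n => ENNReal.add_halves ε ▸ RotNorm.sub_mem_absContSet (hFδ n) hfδ⟩

/-- **Dominated Convergence Theorem.** Let α be a continuous rotationally
symmetric norm, `g ∈ L^α(𝕋)`, and let `K` be the convex hull of
`{|g∘φ|·u : ‖u‖_∞ ≤ 1, φ ∈ G_α}` where `G_α` is the set of invertible measure-preserving
maps preserving α. If `|F n|` lies in the closure of `K` in measure for each `n` and
`F n → f` in measure, then `f ∈ L^α(𝕋)` and `α(F n − f) → 0`. -/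
theorem dominated_convergence
    (N : RotNorm) (hc : IsContNorm N.α)
    (g : 𝕋 → ℂ) (hg : MemL N.α g)
    (K : Set (𝕋 → ℂ))
    (hK : K = convexHull ℝ {F : 𝕋 → ℂ | ∃ u : 𝕋 → ℂ, MemLp u ⊤ m ∧ eLpNorm u ⊤ m ≤ 1 ∧
        ∃ φ : 𝕋 ≃ᵐ 𝕋, MeasurePreserving (⇑φ) m m ∧
          (∀ h : 𝕋 → ℂ, MemLp h ⊤ m → N.α (h ∘ ⇑φ) = N.α h) ∧
          F = fun z => ((‖g (φ z)‖ : ℝ) : ℂ) * u z})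
    (F : ℕ → 𝕋 → ℂ) (f : 𝕋 → ℂ)
    (hFmeas : ∀ n, AEMeasurable (F n) m) (hfmeas : AEMeasurable f m)
    (hmem : ∀ n, ∃ G : ℕ → 𝕋 → ℂ, (∀ k, G k ∈ K) ∧
      TendstoInMeasure m G atTop (fun z => ((‖F n z‖ : ℝ) : ℂ)))
    (hconv : TendstoInMeasure m F atTop f) :
    MemL N.α f ∧ Tendsto (fun n => N.α (F n - f)) atTop (nhds 0) :=
  dominated_convergence_general N hc g hg K hK F f hFmeas hmem hconv
end
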